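/- arXiv:2207.06800 — 3 statements merged into one kernel-verified Lean document; each statement's English description precedes it below -/
import Mathlib

section
/- Let φ : ℝ² → ℝ be continuous with differentiable odd part. Then φ is a collisional invariant, i.e. φ(k) + φ(k*) = φ(k') + φ(k'*) for all k, k*, k', k'* ∈ ℝ² satisfying k + k* = k' + k'* and |k| + |k*| = |k'| + |k'*|, if and only if there exist a, c ∈ ℝ and b ∈ ℝ² such that φ(k) = a + b · k + c|k| for all k ∈ ℝ². -/
open scoped RealInnerProductSpace Topology

theorem collisional_invariant_characterization
    (φ : EuclideanSpace ℝ (Fin 2) → ℝ)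
    (hcont : Continuous φ)
    (hoddpart : Differentiable ℝ fun k => (φ k - φ (-k)) / 2) :
    (∀ k ks k' ks' : EuclideanSpace ℝ (Fin 2),
        k + ks = k' + ks' → ‖k‖ + ‖ks‖ = ‖k'‖ + ‖ks'‖ →
        φ k + φ ks = φ k' + φ ks')
    ↔ ∃ (a c : ℝ) (b : EuclideanSpace ℝ (Fin 2)),
        ∀ k, φ k = a + ⟪b, k⟫ + c * ‖k‖ := by
  constructor
  · intro H
    -- Step 1: scaling law along rays
    have scal : ∀ (k : EuclideanSpace ℝ (Fin 2)) (t : ℝ), 0 ≤ t →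
        φ (t • k) = (1 - t) * φ 0 + t * φ k := by
      intro k
      set g : ℝ → ℝ := fun t => φ (t • k) - φ 0 with hg
      have gcont : Continuous g :=
        (hcont.comp (continuous_id.smul continuous_const)).sub continuous_const
      have gadd : ∀ s t : ℝ, 0 ≤ s → 0 ≤ t → g (s + t) = g s + g t := by
        intro s t hs ht
        have hm : s • k + t • k = (s + t) • k + 0 := by rw [add_smul, add_zero]
        have he : ‖s • k‖ + ‖t • k‖ = ‖(s + t) • k‖ + ‖(0 : EuclideanSpace ℝ (Fin 2))‖ := by
          rw [norm_smul, norm_smul, norm_smul, norm_zero,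
            Real.norm_of_nonneg hs, Real.norm_of_nonneg ht,
            Real.norm_of_nonneg (by linarith)]
          ring
        have := H (s • k) (t • k) ((s + t) • k) 0 hm he
        simp only [hg]
        linarith
      have gdiff : ∀ a b c d : ℝ, 0 ≤ a → 0 ≤ b → 0 ≤ c → 0 ≤ d → a - b = c - d →
          g a - g b = g c - g d := by
        intro a b c d ha hb hc hd h
        have h1 : a + d = c + b := by linarith
        have h2 := gadd a d ha hd
        have h3 := gadd c b hc hb
        rw [h1, h3] at h2
        linarith
      set G : ℝ → ℝ := fun t => g (max t 0) - g (max (-t) 0) with hG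
      have Gadd : ∀ s t : ℝ, G (s + t) = G s + G t := by
        intro s t
        have h1 := gadd (max s 0) (max t 0) (le_max_right _ _) (le_max_right _ _)
        have h2 := gadd (max (-s) 0) (max (-t) 0) (le_max_right _ _) (le_max_right _ _)
        have h3 : g (max (s + t) 0) - g (max (-(s + t)) 0)
            = g (max s 0 + max t 0) - g (max (-s) 0 + max (-t) 0) := by
          apply gdiff _ _ _ _ (le_max_right _ _) (le_max_right _ _)
            (add_nonneg (le_max_right _ _) (le_max_right _ _))
            (add_nonneg (le_max_right _ _) (le_max_right _ _))
          have e1 := max_zero_sub_max_neg_zero_eq_self (s + t)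
          have e2 := max_zero_sub_max_neg_zero_eq_self s
          have e3 := max_zero_sub_max_neg_zero_eq_self t
          linarith
        simp only [hG]
        linarith
      have Gcont : Continuous G :=
        (gcont.comp (continuous_id.max continuous_const)).sub
          (gcont.comp (continuous_neg.max continuous_const))
      have Glin : ∀ t : ℝ, G t = t * G 1 := by
        intro t
        have := map_real_smul (AddMonoidHom.mk' G Gadd) Gcont t 1
        simpa using this
      intro t ht
      have e0 : g 0 = 0 := by simp [hg]
      have hGt : G t = g t := by
        simp only [hG, max_eq_left ht, max_eq_right (neg_nonpos.mpr ht), e0, sub_zero]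
      have hG1 : G 1 = g 1 := by
        simp only [hG, max_eq_left (zero_le_one), max_eq_right (neg_nonpos.mpr zero_le_one),
          e0, sub_zero]
      have key := Glin t
      rw [hGt, hG1] at key
      simp only [hg, one_smul] at key
      have : φ (t • k) = φ 0 + t * (φ k - φ 0) := by linarith
      rw [this]; ring
    -- Step 2: the odd part is linear
    set ψ : EuclideanSpace ℝ (Fin 2) → ℝ := fun k => (φ k - φ (-k)) / 2 with hψ
    have ψ0 : ψ 0 = 0 := by simp [hψ]
    have ψhom : ∀ (k : EuclideanSpace ℝ (Fin 2)) (t : ℝ), 0 ≤ t → ψ (t • k) = t * ψ k := by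
      intro k t ht
      have h1 := scal k t ht
      have h2 := scal (-k) t ht
      simp only [hψ]
      rw [← smul_neg] at *
      rw [h1, h2]
      ring
    have hDf : HasFDerivAt ψ (fderiv ℝ ψ 0) 0 := (hoddpart 0).hasFDerivAt
    have ψlin : ∀ k, ψ k = fderiv ℝ ψ 0 k := by
      intro k
      have hlim := hDf.lim_real k
      have hev : (fun c : ℝ => c • (ψ (0 + c⁻¹ • k) - ψ 0)) =ᶠ[Filter.atTop]
          fun _ => ψ k := by
        filter_upwards [Filter.eventually_gt_atTop (0 : ℝ)] with c hc
        rw [zero_add, ψ0, sub_zero, ψhom k c⁻¹ (by positivity), smul_eq_mul]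
        field_simp
      have hconst : Filter.Tendsto (fun _ : ℝ => ψ k) Filter.atTop (𝓝 (fderiv ℝ ψ 0 k)) :=
        Filter.Tendsto.congr' hev hlim
      exact tendsto_nhds_unique tendsto_const_nhds hconst
    set b : EuclideanSpace ℝ (Fin 2) :=
      (InnerProductSpace.toDual ℝ (EuclideanSpace ℝ (Fin 2))).symm (fderiv ℝ ψ 0) with hbdef
    have hb : ∀ k, ⟪b, k⟫ = fderiv ℝ ψ 0 k := by
      intro k
      rw [hbdef]
      exact InnerProductSpace.toDual_symm_apply
    -- Step 3: the even part is constant on the unit circle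
    have circ : ∀ u m : EuclideanSpace ℝ (Fin 2), ‖u‖ = 1 → ‖m‖ = 1 →
        φ u + φ (-u) = φ m + φ (-m) := by
      intro u m hu hm
      exact H u (-u) m (-m) (by simp) (by rw [norm_neg, norm_neg, hu, hm])
    -- Step 4: assemble
    set e : EuclideanSpace ℝ (Fin 2) := EuclideanSpace.single (0 : Fin 2) (1 : ℝ) with hedef
    have he : ‖e‖ = 1 := by
      rw [hedef, EuclideanSpace.norm_single, norm_one]
    refine ⟨φ 0, (φ e + φ (-e)) / 2 - φ 0, b, fun k => ?_⟩
    have hodd : ⟪b, k⟫ = (φ k - φ (-k)) / 2 := by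
      rw [hb k, ← ψlin k, hψ]
    have heven : (φ k + φ (-k)) / 2 = φ 0 + ((φ e + φ (-e)) / 2 - φ 0) * ‖k‖ := by
      rcases eq_or_ne k 0 with rfl | hk
      · simp only [neg_zero, norm_zero, mul_zero, add_zero]
        ring
      · have ht : 0 < ‖k‖ := norm_pos_iff.mpr hk
        set t : ℝ := ‖k‖ with htdef
        set u : EuclideanSpace ℝ (Fin 2) := t⁻¹ • k with hudef
        have hnu : ‖u‖ = 1 := by
          rw [hudef, norm_smul, norm_inv, Real.norm_eq_abs, abs_of_pos ht, ← htdef,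
            inv_mul_cancel₀ ht.ne']
        have hku : t • u = k := by
          rw [hudef, smul_smul, mul_inv_cancel₀ ht.ne', one_smul]
        have hk1 : φ k = (1 - t) * φ 0 + t * φ u := by
          rw [← hku]; exact scal u t ht.le
        have hk2 : φ (-k) = (1 - t) * φ 0 + t * φ (-u) := by
          rw [← hku, ← smul_neg]; exact scal (-u) t ht.le
        have h3 : t * (φ u + φ (-u)) = t * (φ e + φ (-e)) := by
          rw [circ u e hnu he]
        ring_nf at hk1 hk2 h3 ⊢
        linarith
    rw [hodd]
    linarith [heven]
  · rintro ⟨a, c, b, hφ⟩ k ks k' ks' hm he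
    simp only [hφ]
    have h1 : ⟪b, k⟫ + ⟪b, ks⟫ = ⟪b, k'⟫ + ⟪b, ks'⟫ := by
      rw [← inner_add_right, ← inner_add_right, hm]
    have h2 : c * (‖k‖ + ‖ks‖) = c * (‖k'‖ + ‖ks'‖) := by rw [he]
    ring_nf at h1 h2 ⊢
    linarith
end

section
/- Let φ : ℝ² → ℝ be a collisional invariant and define φ₊(k) = φ(k) + φ(−k). Then φ₊ depends only on |k|: there is a function ψ : [0,∞) → ℝ with φ₊(k) = ψ(|k|) for all k. -/
theorem even_part_depends_only_on_norm
    (φ : EuclideanSpace ℝ (Fin 2) → ℝ)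
    (hinv : ∀ k ks k' ks' : EuclideanSpace ℝ (Fin 2),
      k + ks = k' + ks' → ‖k‖ + ‖ks‖ = ‖k'‖ + ‖ks'‖ →
      φ k + φ ks = φ k' + φ ks') :
    ∃ ψ : ℝ → ℝ, ∀ k : EuclideanSpace ℝ (Fin 2), φ k + φ (-k) = ψ ‖k‖ := by
  set e : EuclideanSpace ℝ (Fin 2) := EuclideanSpace.single 0 1 with he
  have hne : ‖e‖ = 1 := by simp [he]
  refine ⟨fun r => φ (r • e) + φ (-(r • e)), fun k => ?_⟩
  have hnorm : ‖(‖k‖ : ℝ) • e‖ = ‖k‖ := by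
    rw [norm_smul, hne]; simp [abs_of_nonneg (norm_nonneg k)]
  exact hinv k (-k) (‖k‖ • e) (-(‖k‖ • e)) (by simp) (by simp [hnorm])
end

section
/- Let f : ℝ² → (0,1) be such that H(f(k)) := log(f(k)/(1−f(k))) satisfies H(f(k)) + H(f(k*)) = H(f(k')) + H(f(k'*)) for all quadruples with k + k* = k' + k'* and |k| + |k*| = |k'| + |k'*|, and assume H∘f is continuous with differentiable odd part. Then there exist a, c ∈ ℝ and b ∈ ℝ² such that f(k) = 1/(1 + exp(a + b·k + c|k|)) for all k ∈ ℝ². -/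
open scoped RealInnerProductSpace

/-!
Testing the invariance on the collision `(t k, s k) ↦ ((t + s) k, 0)`, `t, s ≥ 0`, shows that
`φ = H ∘ f` is additive, hence (being continuous) affine, on every ray from the origin. Testing it
on `(k, -k) ↦ (k', -k')` with `‖k‖ = ‖k'‖` shows that the even part of `φ - φ 0` is `c ‖k‖` for
one constant `c`. The odd part of `φ` is then positively homogeneous, and a positively homogeneous
function differentiable at `0` coincides with its derivative there, so it is linear.
Finally `f` is recovered from `φ` through the sigmoid, the inverse of the logit `H`.
-/

open Set

theorem eq_mul_of_continuous_of_add_of_nonneg {g : ℝ → ℝ} (hg : Continuous g)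
    (hadd : ∀ s t, 0 ≤ s → 0 ≤ t → g (s + t) = g s + g t) {t : ℝ} (ht : 0 ≤ t) :
    g t = t * g 1 := by
  have hg0 : g 0 = 0 := by simpa using hadd 0 0 le_rfl le_rfl
  let G : ℝ →+ ℝ :=
    { toFun := fun x => g x⁺ - g x⁻
      map_zero' := by simp [hg0]
      map_add' := fun x y => by
        have hparts : (x + y)⁺ + (x⁻ + y⁻) = (x + y)⁻ + (x⁺ + y⁺) := by
          linarith [posPart_sub_negPart x, posPart_sub_negPart y, posPart_sub_negPart (x + y)]
        have := congrArg g hparts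
        simp only [hadd _ _ (posPart_nonneg _) (add_nonneg (negPart_nonneg _) (negPart_nonneg _)),
          hadd _ _ (negPart_nonneg _) (add_nonneg (posPart_nonneg _) (posPart_nonneg _)),
          hadd _ _ (negPart_nonneg x) (negPart_nonneg y),
          hadd _ _ (posPart_nonneg x) (posPart_nonneg y)] at this
        linarith }
  have hG : Continuous G := (hg.comp continuous_posPart).sub (hg.comp continuous_negPart)
  simpa [G, ht, hg0] using map_real_smul G hG t 1

theorem apply_eq_fderiv_zero_of_smul {E F : Type*} [NormedAddCommGroup E] [NormedSpace ℝ E]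
    [NormedAddCommGroup F] [NormedSpace ℝ F] {g : E → F} (hg : DifferentiableAt ℝ g 0)
    (hsmul : ∀ x {t : ℝ}, 0 ≤ t → g (t • x) = t • g x) (x : E) :
    g x = fderiv ℝ g 0 x := by
  have hchain : HasDerivWithinAt (fun t : ℝ => g (t • x)) (fderiv ℝ g 0 x) (Ici 0) 0 := by
    have hg' : HasFDerivAt g (fderiv ℝ g 0) ((0 : ℝ) • x) := by
      rw [zero_smul]; exact hg.hasFDerivAt
    have := hg'.comp_hasDerivAt (0 : ℝ) ((hasDerivAt_id 0).smul_const x)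
    simpa [Function.comp_def] using this.hasDerivWithinAt (s := Ici 0)
  have hlin : HasDerivWithinAt (fun t : ℝ => g (t • x)) (g x) (Ici 0) 0 := by
    have : HasDerivAt (fun t : ℝ => t • g x) (g x) 0 := by
      simpa using (hasDerivAt_id (0 : ℝ)).smul_const (g x)
    exact this.hasDerivWithinAt.congr (fun t ht => hsmul x ht) (hsmul x le_rfl)
  exact (uniqueDiffOn_Ici 0 0 self_mem_Ici).eq_deriv _ hlin hchain

variable {E : Type*} [NormedAddCommGroup E]

/-- Conservation of momentum and of energy for the linear dispersion relation `ε(k) = ‖k‖`. -/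
def IsCollisionInvariant (φ : E → ℝ) : Prop :=
  ∀ k ks k' ks' : E, k + ks = k' + ks' → ‖k‖ + ‖ks‖ = ‖k'‖ + ‖ks'‖ →
    φ k + φ ks = φ k' + φ ks'

namespace IsCollisionInvariant

variable {φ : E → ℝ} (h : IsCollisionInvariant φ)
include h

theorem add_apply_neg_eq_of_norm_eq {k k' : E} (hk : ‖k‖ = ‖k'‖) :
    φ k + φ (-k) = φ k' + φ (-k') :=
  h _ _ _ _ (by simp) (by simp [hk])

variable [NormedSpace ℝ E]

theorem apply_smul (hc : Continuous φ) (k : E) {t : ℝ} (ht : 0 ≤ t) :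
    φ (t • k) = φ 0 + t * (φ k - φ 0) := by
  have hadd : ∀ s r : ℝ, 0 ≤ s → 0 ≤ r →
      φ ((s + r) • k) - φ 0 = (φ (s • k) - φ 0) + (φ (r • k) - φ 0) := by
    intro s r hs hr
    have := h (s • k) (r • k) ((s + r) • k) 0 (by rw [add_smul, add_zero])
      (by rw [norm_smul_of_nonneg hs, norm_smul_of_nonneg hr,
        norm_smul_of_nonneg (add_nonneg hs hr), norm_zero]; ring)
    linarith
  have := eq_mul_of_continuous_of_add_of_nonneg (g := fun s : ℝ => φ (s • k) - φ 0)
    (by fun_prop) hadd ht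
  simp only [one_smul] at this
  linarith

theorem add_apply_neg_eq (hc : Continuous φ) {e : E} (he : ‖e‖ = 1) (k : E) :
    φ k + φ (-k) = 2 * φ 0 + ‖k‖ * (φ e + φ (-e) - 2 * φ 0) := by
  have hnorm : ‖k‖ = ‖‖k‖ • e‖ := by rw [norm_smul_of_nonneg (norm_nonneg k), he, mul_one]
  rw [h.add_apply_neg_eq_of_norm_eq hnorm, ← smul_neg, h.apply_smul hc e (norm_nonneg k),
    h.apply_smul hc (-e) (norm_nonneg k)]
  ring

theorem sub_apply_neg_div_two_smul (hc : Continuous φ) (k : E) {t : ℝ} (ht : 0 ≤ t) :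
    (φ (t • k) - φ (-(t • k))) / 2 = t • ((φ k - φ (-k)) / 2) := by
  rw [← smul_neg, h.apply_smul hc k ht, h.apply_smul hc (-k) ht, smul_eq_mul]
  ring

theorem exists_eq_add_add_mul_norm [Nontrivial E] (hc : Continuous φ)
    (hodd : DifferentiableAt ℝ (fun k => (φ k - φ (-k)) / 2) 0) :
    ∃ (a c : ℝ) (ℓ : E →L[ℝ] ℝ), ∀ k, φ k = a + ℓ k + c * ‖k‖ := by
  obtain ⟨e, he⟩ := exists_norm_eq E zero_le_one
  refine ⟨φ 0, (φ e + φ (-e)) / 2 - φ 0, fderiv ℝ (fun k => (φ k - φ (-k)) / 2) 0, fun k => ?_⟩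
  rw [← apply_eq_fderiv_zero_of_smul hodd (h.sub_apply_neg_div_two_smul hc) k]
  linear_combination (h.add_apply_neg_eq hc he k) / 2

end IsCollisionInvariant

theorem Real.sigmoid_log_div_one_sub {s : ℝ} (hs : s ∈ Ioo 0 1) :
    Real.sigmoid (Real.log (s / (1 - s))) = s := by
  obtain ⟨hs0, hs1⟩ := hs
  have hs1_sub : 0 < 1 - s := by linarith
  rw [Real.sigmoid_def, Real.exp_neg, Real.exp_log (div_pos hs0 hs1_sub), inv_div]
  field_simp
  ring

theorem kernel_of_ee_collision_operator
    (f : EuclideanSpace ℝ (Fin 2) → ℝ)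
    (hrange : ∀ k, f k ∈ Set.Ioo (0 : ℝ) 1)
    (hinv : ∀ k ks k' ks' : EuclideanSpace ℝ (Fin 2),
      k + ks = k' + ks' → ‖k‖ + ‖ks‖ = ‖k'‖ + ‖ks'‖ →
      Real.log (f k / (1 - f k)) + Real.log (f ks / (1 - f ks))
        = Real.log (f k' / (1 - f k')) + Real.log (f ks' / (1 - f ks')))
    (hcont : Continuous fun k => Real.log (f k / (1 - f k)))
    (hoddpart : Differentiable ℝ fun k =>
      (Real.log (f k / (1 - f k)) - Real.log (f (-k) / (1 - f (-k)))) / 2) :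
    ∃ (a c : ℝ) (b : EuclideanSpace ℝ (Fin 2)),
      ∀ k, f k = 1 / (1 + Real.exp (a + ⟪b, k⟫ + c * ‖k‖)) := by
  have hφ : IsCollisionInvariant fun k => Real.log (f k / (1 - f k)) := hinv
  obtain ⟨a, c, ℓ, hrep⟩ := hφ.exists_eq_add_add_mul_norm hcont (hoddpart 0)
  refine ⟨-a, -c, -(InnerProductSpace.toDual ℝ _).symm ℓ, fun k => ?_⟩
  have harg : -a + ⟪-(InnerProductSpace.toDual ℝ _).symm ℓ, k⟫ + -c * ‖k‖
      = -Real.log (f k / (1 - f k)) := by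
    rw [inner_neg_left, InnerProductSpace.toDual_symm_apply, hrep k]
    ring
  rw [harg, one_div, ← Real.sigmoid_def, Real.sigmoid_log_div_one_sub (hrange k)]
end
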